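/- arXiv:1910.08334 — 4 statements merged into one kernel-verified Lean document; each statement's English description precedes it below -/
import Mathlib

section
/- Let V be a complex inner product space carrying a representation {Lₙ}_{n∈ℤ} of the Virasoro algebra with a cyclic lowest weight vector Ω (LₙΩ = 0 for n > 0, L₀Ω = hΩ with h ∈ ℝ). Suppose that for every n ∈ ℤ the operator L₀ - (-1)ⁿL₋ₙ has adjoint L₀ - (-1)ⁿLₙ with respect to the given Hermitian form. Then Lₙ† = L₋ₙ for all n ∈ ℤ, i.e., the form is invariant for the representation. -/
open Complex

private lemma eps_sq (n : ℤ) : ((-1:ℂ)^n) * ((-1:ℂ)^n) = 1 := by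
  rw [← zpow_add₀ (by norm_num : (-1:ℂ) ≠ 0)]
  exact Even.neg_one_zpow ⟨n, rfl⟩

private lemma eps_neg (n : ℤ) : (-1:ℂ)^(-n) = (-1:ℂ)^n := by
  rw [zpow_neg]
  exact inv_eq_of_mul_eq_one_right (eps_sq n)

private lemma eps_conj (n : ℤ) : (starRingEnd ℂ) ((-1:ℂ)^n) = (-1:ℂ)^n := by
  rw [map_zpow₀]; norm_num

section Aux

variable {V : Type*} [NormedAddCommGroup V] [InnerProductSpace ℂ V]

/-- vector obtained by applying a word of generators to Ω -/
def vWord (L : ℤ → V →ₗ[ℂ] V) (Ω : V) (w : List ℤ) : V :=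
  w.foldr (fun n x => L n x) Ω

@[simp] lemma vWord_nil (L : ℤ → V →ₗ[ℂ] V) (Ω : V) : vWord L Ω [] = Ω := rfl

@[simp] lemma vWord_cons (L : ℤ → V →ₗ[ℂ] V) (Ω : V) (n : ℤ) (w : List ℤ) :
    vWord L Ω (n :: w) = L n (vWord L Ω w) := rfl

/-- pointwise commutator relation -/
lemma comm_apply (c : ℂ) (L : ℤ → V →ₗ[ℂ] V)
    (hvir : ∀ m n : ℤ, L m ∘ₗ L n - L n ∘ₗ L m
      = ((m : ℂ) - (n : ℂ)) • L (m + n)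
        + (if m + n = 0 then c / 12 * (m : ℂ) * ((m : ℂ) ^ 2 - 1) else 0) • LinearMap.id)
    (m n : ℤ) (x : V) :
    L m (L n x) = L n (L m x) + ((m : ℂ) - (n : ℂ)) • L (m + n) x
      + (if m + n = 0 then c / 12 * (m : ℂ) * ((m : ℂ) ^ 2 - 1) else 0) • x := by
  have := DFunLike.congr_fun (hvir m n) x
  simp only [LinearMap.sub_apply, LinearMap.comp_apply, LinearMap.add_apply,
    LinearMap.smul_apply, LinearMap.id_apply] at this
  rw [sub_eq_iff_eq_add] at this
  rw [this]; abel

/-- every word vector is an L₀-eigenvector -/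
lemma word_eigen (c : ℂ) (L : ℤ → V →ₗ[ℂ] V)
    (hvir : ∀ m n : ℤ, L m ∘ₗ L n - L n ∘ₗ L m
      = ((m : ℂ) - (n : ℂ)) • L (m + n)
        + (if m + n = 0 then c / 12 * (m : ℂ) * ((m : ℂ) ^ 2 - 1) else 0) • LinearMap.id)
    (Ω : V) (h : ℝ) (h0 : L 0 Ω = (h : ℂ) • Ω) :
    ∀ w : List ℤ, L 0 (vWord L Ω w) = ((h : ℂ) - (w.sum : ℂ)) • vWord L Ω w := by
  intro w
  induction w with
  | nil => simpa using h0
  | cons n w' ih =>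
    have hc := comm_apply c L hvir 0 n (vWord L Ω w')
    simp only [zero_add] at hc
    have hif : (if n = 0 then c / 12 * ((0:ℤ) : ℂ) * (((0:ℤ) : ℂ) ^ 2 - 1) else 0) = (0:ℂ) := by
      split <;> simp
    rw [hif, zero_smul, add_zero, ih, map_smul] at hc
    rw [vWord_cons, hc]
    have hsum : ((n :: w').sum : ℂ) = (n : ℂ) + (w'.sum : ℂ) := by
      rw [List.sum_cons]; push_cast; ring
    rw [hsum]
    module

/-- the key adjoint relation with defect -/
lemma adj_defect (L : ℤ → V →ₗ[ℂ] V)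
    (hadj : ∀ n : ℤ, ∀ x y : V,
      (inner ℂ ((L 0 - ((-1 : ℂ) ^ n) • L (-n)) x) y : ℂ)
        = inner ℂ x ((L 0 - ((-1 : ℂ) ^ n) • L n) y))
    (n : ℤ) (x y : V) :
    (inner ℂ (L n x) y : ℂ) = inner ℂ x (L (-n) y)
      + (-1:ℂ)^n * ((inner ℂ (L 0 x) y : ℂ) - inner ℂ x (L 0 y)) := by
  have H := hadj (-n) x y
  simp only [LinearMap.sub_apply, LinearMap.smul_apply, inner_sub_left, inner_sub_right,
    inner_smul_left, inner_smul_right, eps_neg, eps_conj, neg_neg] at H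
  linear_combination (-(-1:ℂ)^n) * H
    + ((inner ℂ x (L (-n) y) : ℂ) - (inner ℂ (L n x) y : ℂ)) * (eps_sq n)

/-- set of vectors given by negative words with bounded length and fixed sum -/
def negSet (L : ℤ → V →ₗ[ℂ] V) (Ω : V) (t : ℤ) (k : ℕ) : Set V :=
  {x | ∃ u : List ℤ, (∀ i ∈ u, i < 0) ∧ u.length ≤ k ∧ u.sum = t ∧ x = vWord L Ω u}

lemma negSet_mono (L : ℤ → V →ₗ[ℂ] V) (Ω : V) (t : ℤ) {k k' : ℕ} (hk : k ≤ k') :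
    negSet L Ω t k ⊆ negSet L Ω t k' := by
  rintro x ⟨u, hu, hlen, hsum, rfl⟩
  exact ⟨u, hu, hlen.trans hk, hsum, rfl⟩

/-- raising operators map negative word vectors into spans of negative word vectors -/
lemma raise (c : ℂ) (L : ℤ → V →ₗ[ℂ] V)
    (hvir : ∀ m n : ℤ, L m ∘ₗ L n - L n ∘ₗ L m
      = ((m : ℂ) - (n : ℂ)) • L (m + n)
        + (if m + n = 0 then c / 12 * (m : ℂ) * ((m : ℂ) ^ 2 - 1) else 0) • LinearMap.id)
    (Ω : V) (h : ℝ) (hlw : ∀ n : ℤ, 0 < n → L n Ω = 0) (h0 : L 0 Ω = (h : ℂ) • Ω) :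
    ∀ k : ℕ, ∀ p : ℤ, 0 < p → ∀ v : List ℤ, v.length ≤ k → (∀ i ∈ v, i < 0) →
      L p (vWord L Ω v) ∈ Submodule.span ℂ (negSet L Ω (p + v.sum) k) := by
  intro k
  induction k with
  | zero =>
    intro p hp v hv _
    have : v = [] := List.length_eq_zero_iff.mp (Nat.le_zero.mp hv)
    subst this
    simp [hlw p hp]
  | succ k ih =>
    intro p hp v hv hneg
    cases v with
    | nil => simp [hlw p hp]
    | cons q v' =>
      have hq : q < 0 := hneg q (List.mem_cons_self)
      have hv' : v'.length ≤ k := by simp at hv; omega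
      have hneg' : ∀ i ∈ v', i < 0 := fun i hi => hneg i (List.mem_cons_of_mem q hi)
      rw [vWord_cons, comm_apply c L hvir p q (vWord L Ω v')]
      refine add_mem (add_mem ?_ ?_) ?_
      · -- L q (L p z)
        have h1 := ih p hp v' hv' hneg'
        have h2 : Submodule.span ℂ (negSet L Ω (p + v'.sum) k)
            ≤ Submodule.comap (L q) (Submodule.span ℂ (negSet L Ω (p + (q :: v').sum) (k+1))) := by
          apply Submodule.span_le.2
          rintro x ⟨u, hu, hlen, hs, rfl⟩
          simp only [SetLike.mem_coe, Submodule.mem_comap]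
          apply Submodule.subset_span
          refine ⟨q :: u, ?_, by simpa using Nat.succ_le_succ hlen,
            by rw [List.sum_cons, List.sum_cons]; omega, rfl⟩
          intro i hi
          rcases List.mem_cons.mp hi with rfl | hi
          · exact hq
          · exact hu i hi
        exact h2 h1
      · -- ((p:ℂ)-q) • L (p+q) z
        apply Submodule.smul_mem
        rcases lt_trichotomy (p + q) 0 with hpq | hpq | hpq
        · apply Submodule.subset_span
          refine ⟨(p+q) :: v', ?_, by simpa using Nat.succ_le_succ hv',
            by rw [List.sum_cons, List.sum_cons]; omega, rfl⟩
          intro i hi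
          rcases List.mem_cons.mp hi with rfl | hi
          · exact hpq
          · exact hneg' i hi
        · rw [hpq, word_eigen c L hvir Ω h h0 v']
          apply Submodule.smul_mem
          apply Submodule.subset_span
          refine ⟨v', hneg', hv'.trans (Nat.le_succ k), by rw [List.sum_cons]; omega, rfl⟩
        · have hmem := ih (p+q) hpq v' hv' hneg'
          have heq : (p+q) + v'.sum = p + (q :: v').sum := by rw [List.sum_cons]; ring
          have hmono : Submodule.span ℂ (negSet L Ω ((p+q) + v'.sum) k)
              ≤ Submodule.span ℂ (negSet L Ω (p + (q :: v').sum) (k+1)) := by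
            rw [heq]
            exact Submodule.span_mono (negSet_mono L Ω _ (Nat.le_succ k))
          exact hmono hmem
      · -- central term
        by_cases hpq : p + q = 0
        · rw [if_pos hpq]
          apply Submodule.smul_mem
          apply Submodule.subset_span
          refine ⟨v', hneg', hv'.trans (Nat.le_succ k), by rw [List.sum_cons]; omega, rfl⟩
        · rw [if_neg hpq, zero_smul]
          exact Submodule.zero_mem _

/-- every word vector lies in the span of negative word vectors -/
lemma to_neg (c : ℂ) (L : ℤ → V →ₗ[ℂ] V)
    (hvir : ∀ m n : ℤ, L m ∘ₗ L n - L n ∘ₗ L m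
      = ((m : ℂ) - (n : ℂ)) • L (m + n)
        + (if m + n = 0 then c / 12 * (m : ℂ) * ((m : ℂ) ^ 2 - 1) else 0) • LinearMap.id)
    (Ω : V) (h : ℝ) (hlw : ∀ n : ℤ, 0 < n → L n Ω = 0) (h0 : L 0 Ω = (h : ℂ) • Ω) :
    ∀ w : List ℤ, vWord L Ω w ∈
      Submodule.span ℂ {x : V | ∃ u : List ℤ, (∀ i ∈ u, i < 0) ∧ x = vWord L Ω u} := by
  intro w
  induction w with
  | nil => exact Submodule.subset_span ⟨[], by simp, rfl⟩
  | cons n w' ih =>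
    rw [vWord_cons]
    have key : Submodule.span ℂ {x : V | ∃ u : List ℤ, (∀ i ∈ u, i < 0) ∧ x = vWord L Ω u}
        ≤ Submodule.comap (L n)
          (Submodule.span ℂ {x : V | ∃ u : List ℤ, (∀ i ∈ u, i < 0) ∧ x = vWord L Ω u}) := by
      apply Submodule.span_le.2
      rintro x ⟨u, hu, rfl⟩
      simp only [SetLike.mem_coe, Submodule.mem_comap]
      rcases lt_trichotomy n 0 with hn | hn | hn
      · apply Submodule.subset_span
        refine ⟨n :: u, ?_, rfl⟩
        intro i hi
        rcases List.mem_cons.mp hi with rfl | hi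
        · exact hn
        · exact hu i hi
      · subst hn
        rw [word_eigen c L hvir Ω h h0 u]
        exact Submodule.smul_mem _ _ (Submodule.subset_span ⟨u, hu, rfl⟩)
      · have hr := raise c L hvir Ω h hlw h0 u.length n hn u le_rfl hu
        have hle : Submodule.span ℂ (negSet L Ω (n + u.sum) u.length)
            ≤ Submodule.span ℂ {x : V | ∃ u : List ℤ, (∀ i ∈ u, i < 0) ∧ x = vWord L Ω u} := by
          apply Submodule.span_le.2
          rintro x ⟨u', hu', _, _, rfl⟩
          exact Submodule.subset_span ⟨u', hu', rfl⟩
        exact hle hr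
    exact key ih

end Aux

/-- For a lowest weight representation {Lₙ} of the Virasoro algebra on a complex inner
product space with cyclic lowest weight vector Ω (h ∈ ℝ), if L₀ - (-1)ⁿL₋ₙ has adjoint
L₀ - (-1)ⁿLₙ for every n, then Lₙ† = L₋ₙ for all n, i.e. the form is invariant. -/
theorem stmt_11 {V : Type*} [NormedAddCommGroup V] [InnerProductSpace ℂ V]
    (c : ℂ) (L : ℤ → V →ₗ[ℂ] V)
    (hvir : ∀ m n : ℤ, L m ∘ₗ L n - L n ∘ₗ L m
      = ((m : ℂ) - (n : ℂ)) • L (m + n)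
        + (if m + n = 0 then c / 12 * (m : ℂ) * ((m : ℂ) ^ 2 - 1) else 0) • LinearMap.id)
    (Ω : V) (hΩ : Ω ≠ 0) (h : ℝ)
    (hlw : ∀ n : ℤ, 0 < n → L n Ω = 0) (h0 : L 0 Ω = (h : ℂ) • Ω)
    (hcyc : ∀ v : V, v ∈ Submodule.span ℂ
      {w : V | ∃ l : List ℤ, w = l.foldr (fun n x => L n x) Ω})
    (hadj : ∀ n : ℤ, ∀ x y : V,
      (inner ℂ ((L 0 - ((-1 : ℂ) ^ n) • L (-n)) x) y : ℂ)
        = inner ℂ x ((L 0 - ((-1 : ℂ) ^ n) • L n) y)) :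
    ∀ n : ℤ, ∀ x y : V, (inner ℂ ((L n) x) y : ℂ) = inner ℂ x ((L (-n)) y) := by
  -- orthogonality of negative word vectors of different weights
  have orth : ∀ k : ℕ, ∀ u v : List ℤ, (∀ i ∈ u, i < 0) → (∀ i ∈ v, i < 0) →
      u.length + v.length ≤ k → u.sum ≠ v.sum →
      (inner ℂ (vWord L Ω u) (vWord L Ω v) : ℂ) = 0 := by
    intro k
    induction k with
    | zero =>
      intro u v hu hv hlen hsum
      have h1 : u = [] := List.length_eq_zero_iff.mp (by omega)
      have h2 : v = [] := List.length_eq_zero_iff.mp (by omega)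
      subst h1; subst h2
      simp at hsum
    | succ k ih =>
      intro u v hu hv hlen hsum
      cases u with
      | nil =>
        cases v with
        | nil => simp at hsum
        | cons n v' =>
          have hn : n < 0 := hv n (List.mem_cons_self)
          have hv' : ∀ i ∈ v', i < 0 := fun i hi => hv i (List.mem_cons_of_mem n hi)
          have He := adj_defect L hadj (-n) Ω (vWord L Ω v')
          have e0 : (inner ℂ (L (-n) Ω) (vWord L Ω v') : ℂ) = 0 := by
            rw [hlw (-n) (by omega)]; simp
          have e1 : (inner ℂ (L 0 Ω) (vWord L Ω v') : ℂ)
              = (h : ℂ) * inner ℂ Ω (vWord L Ω v') := by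
            rw [h0, inner_smul_left, Complex.conj_ofReal]
          have e2 : (inner ℂ Ω (L 0 (vWord L Ω v')) : ℂ)
              = ((h : ℂ) - (v'.sum : ℂ)) * inner ℂ Ω (vWord L Ω v') := by
            rw [word_eigen c L hvir Ω h h0 v', inner_smul_right]
          rw [e0, e1, e2, neg_neg, eps_neg] at He
          have key : (inner ℂ Ω (L n (vWord L Ω v')) : ℂ)
              = -((-1:ℂ)^n * (v'.sum : ℂ) * inner ℂ Ω (vWord L Ω v')) := by
            linear_combination -He
          rw [vWord_cons, vWord_nil, key]
          by_cases hs : v'.sum = 0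
          · rw [hs]; push_cast; ring
          · have hzero : (inner ℂ Ω (vWord L Ω v') : ℂ) = 0 := by
              have := ih [] v' (by simp) hv' (by simp at hlen ⊢; omega)
                (by simpa using fun e => hs e.symm)
              simpa using this
            rw [hzero]; ring
      | cons m u' =>
        have hm : m < 0 := hu m (List.mem_cons_self)
        have hu' : ∀ i ∈ u', i < 0 := fun i hi => hu i (List.mem_cons_of_mem m hi)
        have He := adj_defect L hadj m (vWord L Ω u') (vWord L Ω v)
        rw [vWord_cons, He]
        have term2 : (inner ℂ (L 0 (vWord L Ω u')) (vWord L Ω v) : ℂ)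
            - inner ℂ (vWord L Ω u') (L 0 (vWord L Ω v)) = 0 := by
          rw [word_eigen c L hvir Ω h h0 u', word_eigen c L hvir Ω h h0 v]
          rw [inner_smul_left, inner_smul_right, map_sub, Complex.conj_ofReal, map_intCast]
          by_cases hsv : u'.sum = v.sum
          · rw [hsv]; ring
          · have hz : (inner ℂ (vWord L Ω u') (vWord L Ω v) : ℂ) = 0 :=
              ih u' v hu' hv (by simp at hlen ⊢; omega) hsv
            rw [hz]; ring
        have term1 : (inner ℂ (vWord L Ω u') (L (-m) (vWord L Ω v)) : ℂ) = 0 := by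
          have hr := raise c L hvir Ω h hlw h0 v.length (-m) (by omega) v le_rfl hv
          have hker : Submodule.span ℂ (negSet L Ω (-m + v.sum) v.length)
              ≤ LinearMap.ker (innerₛₗ ℂ (vWord L Ω u')) := by
            apply Submodule.span_le.2
            rintro x ⟨u'', hu'', hlen'', hsum'', rfl⟩
            simp only [SetLike.mem_coe, LinearMap.mem_ker, innerₛₗ_apply_apply]
            apply ih u' u'' hu' hu''
            · simp at hlen ⊢; omega
            · rw [List.sum_cons] at hsum; omega
          have := hker hr
          simpa using this
        rw [term1, term2]
        ring
  -- every vector lies in the span of negative word vectors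
  have allNegSpan : ∀ v : V, v ∈ Submodule.span ℂ
      {x : V | ∃ u : List ℤ, (∀ i ∈ u, i < 0) ∧ x = vWord L Ω u} := by
    intro v
    have h1 := hcyc v
    have h2 : Submodule.span ℂ {w : V | ∃ l : List ℤ, w = l.foldr (fun n x => L n x) Ω}
        ≤ Submodule.span ℂ {x : V | ∃ u : List ℤ, (∀ i ∈ u, i < 0) ∧ x = vWord L Ω u} := by
      apply Submodule.span_le.2
      rintro x ⟨l, rfl⟩
      exact to_neg c L hvir Ω h hlw h0 l
    exact h2 h1
  -- L0 is symmetric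
  have L0sym : ∀ x y : V, (inner ℂ (L 0 x) y : ℂ) = inner ℂ x (L 0 y) := by
    have main : ∀ x, x ∈ Submodule.span ℂ
        {x : V | ∃ u : List ℤ, (∀ i ∈ u, i < 0) ∧ x = vWord L Ω u} →
        ∀ y, y ∈ Submodule.span ℂ
          {x : V | ∃ u : List ℤ, (∀ i ∈ u, i < 0) ∧ x = vWord L Ω u} →
        (inner ℂ (L 0 x) y : ℂ) = inner ℂ x (L 0 y) := by
      intro x hx
      induction hx using Submodule.span_induction with
      | mem x hx =>
        obtain ⟨u, hu, rfl⟩ := hx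
        intro y hy
        induction hy using Submodule.span_induction with
        | mem y hy =>
          obtain ⟨v, hv, rfl⟩ := hy
          rw [word_eigen c L hvir Ω h h0 u, word_eigen c L hvir Ω h h0 v]
          rw [inner_smul_left, inner_smul_right, map_sub, Complex.conj_ofReal, map_intCast]
          by_cases hsv : u.sum = v.sum
          · rw [hsv]
          · rw [orth (u.length + v.length) u v hu hv le_rfl hsv]
            ring
        | zero => simp
        | add y z hy hz ihy ihz => simp only [map_add, inner_add_right, ihy, ihz]
        | smul a y hy ihy => simp only [map_smul, inner_smul_right, ihy]
      | zero => intro y hy; simp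
      | add x z hx hz ihx ihz =>
        intro y hy
        simp only [map_add, inner_add_left, ihx y hy, ihz y hy]
      | smul a x hx ihx =>
        intro y hy
        simp only [map_smul, inner_smul_left, ihx y hy]
    intro x y
    exact main x (allNegSpan x) y (allNegSpan y)
  intro n x y
  have H := adj_defect L hadj n x y
  rw [H, L0sym x y, sub_self, mul_zero, add_zero]
end

section
/- Let {Lₙ, Wₙ}_{n∈ℤ} be a representation of the W₃-algebra on an inner product space with lowest weight vector Ω satisfying LₙΩ = WₙΩ = 0 for n > 0 and L₀Ω = W₀Ω = 0. If (L₋₁ + L₀)† = L₁ + L₀ with respect to the inner product, then L₋₁Ω = 0, and consequently W₋₁Ω = 0 and W₋₂Ω = 0. -/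
/-!
With `T = L₋₁ + L₀` and `T† = L₁ + L₀`, the vector `v = L₋₁Ω = TΩ` satisfies `T†Ω = 0` and,
by `[L₁, L₋₁] = 2L₀` and `[L₀, L₋₁] = L₋₁`, also `T†v = v`. Hence
`‖v‖² = ⟨TΩ, v⟩ = ⟨Ω, T†v⟩ = ⟨Ω, TΩ⟩ = conj ⟨Ω, T†Ω⟩ = 0`.
Once `L₋₁Ω = 0`, the relation `[L₋₁, Wₙ] = -(n + 2) W_{n-1}` lowers `W₀Ω = 0` to
`W₋₁Ω = 0` and then to `W₋₂Ω = 0`.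
-/

open scoped InnerProductSpace

lemma apply_eq_zero_of_inner_map_eq_inner_apply {V : Type*} [NormedAddCommGroup V]
    [InnerProductSpace ℂ V] {T S : V →ₗ[ℂ] V} (hTS : ∀ x y, ⟪T x, y⟫_ℂ = ⟪x, S y⟫_ℂ) {Ω : V}
    (hSΩ : S Ω = 0) (hST : S (T Ω) = T Ω) : T Ω = 0 := by
  have hΩT : ⟪Ω, T Ω⟫_ℂ = 0 := by
    rw [← inner_conj_symm, hTS, hSΩ, inner_zero_right, map_zero]
  rw [← inner_self_eq_zero (𝕜 := ℂ), hTS, hST, hΩT]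

lemma LinearMap.apply_apply_eq_of_commutator_eq {R M : Type*} [CommRing R] [AddCommGroup M]
    [Module R M] {A B C : M →ₗ[R] M} (h : A ∘ₗ B - B ∘ₗ A = C) {x : M} (hAx : A x = 0) :
    A (B x) = C x := by
  simpa [hAx] using LinearMap.congr_fun h x

section W3

variable {V : Type*} [AddCommGroup V] [Module ℂ V] {c : ℂ} {L W : ℤ → V →ₗ[ℂ] V}
  {Ω : V}

lemma L_one_L_neg_one_apply
    (hLL : ∀ m n : ℤ, L m ∘ₗ L n - L n ∘ₗ L m
      = ((m : ℂ) - (n : ℂ)) • L (m + n)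
        + (if m + n = 0 then c / 12 * (m : ℂ) * ((m : ℂ) ^ 2 - 1) else 0) • LinearMap.id)
    (hL1 : L 1 Ω = 0) (hL0 : L 0 Ω = 0) : L 1 (L (-1) Ω) = 0 := by
  rw [LinearMap.apply_apply_eq_of_commutator_eq (hLL 1 (-1)) hL1]
  simp [hL0]

lemma L_zero_L_neg_one_apply
    (hLL : ∀ m n : ℤ, L m ∘ₗ L n - L n ∘ₗ L m
      = ((m : ℂ) - (n : ℂ)) • L (m + n)
        + (if m + n = 0 then c / 12 * (m : ℂ) * ((m : ℂ) ^ 2 - 1) else 0) • LinearMap.id)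
    (hL0 : L 0 Ω = 0) : L 0 (L (-1) Ω) = L (-1) Ω := by
  rw [LinearMap.apply_apply_eq_of_commutator_eq (hLL 0 (-1)) hL0]
  simp

lemma W_sub_one_apply_eq_zero
    (hLW : ∀ m n : ℤ, L m ∘ₗ W n - W n ∘ₗ L m = (2 * (m : ℂ) - (n : ℂ)) • W (m + n))
    (hL : L (-1) Ω = 0) {n : ℤ} (hn : n ≠ -2) (hW : W n Ω = 0) : W (n - 1) Ω = 0 := by
  have h := LinearMap.apply_apply_eq_of_commutator_eq (hLW (-1) n) hL
  have hcoef : 2 * ((-1 : ℤ) : ℂ) - n ≠ 0 := by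
    rw [show 2 * ((-1 : ℤ) : ℂ) - n = ((-2 - n : ℤ) : ℂ) by push_cast; ring]
    exact_mod_cast sub_ne_zero.mpr (Ne.symm hn)
  rw [hW, map_zero, LinearMap.smul_apply, eq_comm, smul_eq_zero] at h
  rw [neg_add_eq_sub] at h
  exact h.resolve_left hcoef

end W3

/-- For a representation {Lₙ, Wₙ} of the W₃-algebra on an inner product space with a
vector Ω satisfying LₙΩ = WₙΩ = 0 for n > 0 and L₀Ω = W₀Ω = 0: if (L₋₁ + L₀)† = L₁ + L₀,
then L₋₁Ω = 0, W₋₁Ω = 0 and W₋₂Ω = 0. -/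
theorem stmt_12 {V : Type*} [NormedAddCommGroup V] [InnerProductSpace ℂ V]
    (c : ℂ) (L W : ℤ → V →ₗ[ℂ] V)
    (hLL : ∀ m n : ℤ, L m ∘ₗ L n - L n ∘ₗ L m
      = ((m : ℂ) - (n : ℂ)) • L (m + n)
        + (if m + n = 0 then c / 12 * (m : ℂ) * ((m : ℂ) ^ 2 - 1) else 0) • LinearMap.id)
    (hLW : ∀ m n : ℤ, L m ∘ₗ W n - W n ∘ₗ L m = (2 * (m : ℂ) - (n : ℂ)) • W (m + n))
    (Ω : V)
    (hpos : ∀ n : ℤ, 0 < n → L n Ω = 0 ∧ W n Ω = 0)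
    (hL0 : L 0 Ω = 0) (hW0 : W 0 Ω = 0)
    (hadj : ∀ x y : V, (inner ℂ ((L (-1) + L 0) x) y : ℂ) = inner ℂ x ((L 1 + L 0) y)) :
    L (-1) Ω = 0 ∧ W (-1) Ω = 0 ∧ W (-2) Ω = 0 := by
  have hL1 : L 1 Ω = 0 := (hpos 1 one_pos).1
  have hL : L (-1) Ω = 0 := by
    have key := apply_eq_zero_of_inner_map_eq_inner_apply hadj (Ω := Ω)
      (by simp [hL1, hL0])
      (by simp [hL0, L_one_L_neg_one_apply hLL hL1 hL0, L_zero_L_neg_one_apply hLL hL0])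
    simpa [hL0] using key
  have hW1 : W (-1) Ω = 0 := W_sub_one_apply_eq_zero hLW hL (by norm_num) hW0
  exact ⟨hL, hW1, W_sub_one_apply_eq_zero hLW hL (by norm_num) hW1⟩
end

section
/- Let {aₙ} satisfy the Heisenberg relations [aₘ, aₙ] = m δ_{m+n,0} on V, with associated Virasoro modes Lₙ (canonical construction, central charge 1). For any η, κ ∈ ℂ, the operators L̃ₙ := Lₙ - iκn·aₙ + η·aₙ for n ≠ 0 and L̃₀ := L₀ + η·a₀ + (κ² + η²)/2 satisfy the Virasoro relations [L̃ₘ, L̃ₙ] = (m-n)L̃_{m+n} + (c/12)m(m²-1)δ_{m+n,0} with central charge c = 1 + 12κ². -/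
/-!
Write `L̃ₙ = Lₙ + αₙ aₙ + δₙ₀ ν` with `αₙ = α n + β` (here `α = -iκ`, `β = η`). Expanding the
bracket, `[L̃ₘ, L̃ₙ] = [Lₘ, Lₙ] + (m αₘ - n αₙ) a_{m+n} + m αₘ α₋ₘ δ_{m+n,0}`. The identity
`m αₘ - n αₙ = (m - n) α_{m+n}` turns the middle term into the `a`-part of `(m - n) L̃_{m+n}`, and
the central term `m (β² - α² m²)` splits as `2 m ν` with `ν = (β² - α²) / 2`, the constant part of
`(m - n) L̃₀`, plus `-α² (m³ - m)`, which shifts the central charge from `c` to `c - 12 α²`.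
-/

section VirasoroRelations

variable {k 𝔤 : Type*} [Field k] [LieRing 𝔤] [LieAlgebra k 𝔤]

/- The relations are stated in a Lie algebra with a distinguished central element `z`, which
becomes the identity operator when `𝔤` is an endomorphism algebra. -/
def IsVirasoro (c : k) (z : 𝔤) (L : ℤ → 𝔤) : Prop :=
  ∀ m n : ℤ, ⁅L m, L n⁆ = ((m : k) - n) • L (m + n)
    + (if m + n = 0 then c / 12 * m * ((m : k) ^ 2 - 1) else 0) • z

variable (k) in
def IsHeisenberg (z : 𝔤) (a : ℤ → 𝔤) : Prop :=
  ∀ m n : ℤ, ⁅a m, a n⁆ = (if m + n = 0 then (m : k) else 0) • z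

theorem IsVirasoro.add_smul_heisenberg [CharZero k] {c : k} {z : 𝔤} {L a : ℤ → 𝔤}
    (hz : ∀ x : 𝔤, ⁅x, z⁆ = 0) (hL : IsVirasoro c z L) (ha : IsHeisenberg k z a)
    (hLa : ∀ m n : ℤ, ⁅L n, a m⁆ = -(m : k) • a (n + m)) (α β : k) :
    IsVirasoro (c - 12 * α ^ 2) z
      (fun n ↦ L n + (α * n + β) • a n + (if n = 0 then (β ^ 2 - α ^ 2) / 2 else 0) • z) := by
  intro m n
  have haL : ⁅a m, L n⁆ = (m : k) • a (m + n) := by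
    rw [← lie_skew, hLa, add_comm n m, neg_smul, neg_neg]
  simp only [lie_add, add_lie, lie_smul, smul_lie, hz, ← lie_skew z, smul_zero, neg_zero, add_zero,
    hL m n, ha m n, haL, hLa n m]
  by_cases h : m + n = 0
  · obtain rfl : n = -m := by omega
    simp only [add_neg_cancel, if_true, Int.cast_neg, Int.cast_zero]
    module
  · simp only [h, if_false, zero_smul, add_zero]
    push_cast
    module

end VirasoroRelations

/-- Given a Heisenberg field {aₙ} and its canonical Virasoro modes {Lₙ} (central charge 1,
[Lₙ,aₘ] = -m·a_{n+m}), for any η, κ ∈ ℂ the operators L̃ₙ = Lₙ - iκn·aₙ + η·aₙ (n ≠ 0) and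
L̃₀ = L₀ + η·a₀ + (κ²+η²)/2 satisfy the Virasoro relations with central charge 1 + 12κ². -/
theorem stmt_14 {V : Type*} [AddCommGroup V] [Module ℂ V]
    (a : ℤ → V →ₗ[ℂ] V)
    (hheis : ∀ m n : ℤ, a m ∘ₗ a n - a n ∘ₗ a m
      = (if m + n = 0 then (m : ℂ) else 0) • LinearMap.id)
    (L : ℤ → V →ₗ[ℂ] V)
    (hvir : ∀ m n : ℤ, L m ∘ₗ L n - L n ∘ₗ L m
      = ((m : ℂ) - (n : ℂ)) • L (m + n)
        + (if m + n = 0 then (1 : ℂ) / 12 * (m : ℂ) * ((m : ℂ) ^ 2 - 1) else 0)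
          • LinearMap.id)
    (hLa : ∀ m n : ℤ, L n ∘ₗ a m - a m ∘ₗ L n = (-(m : ℂ)) • a (n + m))
    (η κ : ℂ) (Lt : ℤ → V →ₗ[ℂ] V)
    (hLt0 : Lt 0 = L 0 + η • a 0 + ((κ ^ 2 + η ^ 2) / 2) • LinearMap.id)
    (hLtn : ∀ n : ℤ, n ≠ 0 →
      Lt n = L n + (-(Complex.I) * κ * (n : ℂ)) • a n + η • a n) :
    ∀ m n : ℤ, Lt m ∘ₗ Lt n - Lt n ∘ₗ Lt m
      = ((m : ℂ) - (n : ℂ)) • Lt (m + n)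
        + (if m + n = 0 then (1 + 12 * κ ^ 2) / 12 * (m : ℂ) * ((m : ℂ) ^ 2 - 1) else 0)
          • LinearMap.id := by
  -- Mathlib provides the commutator Lie ring structure on `Module.End` only as a local instance.
  let _ : LieRing (Module.End ℂ V) := LieRing.ofAssociativeRing
  have hI : (-Complex.I * κ) ^ 2 = -κ ^ 2 := by rw [mul_pow, neg_sq, Complex.I_sq]; ring
  have hLt : Lt = fun n ↦ L n + (-Complex.I * κ * n + η) • a n
      + (if n = 0 then (η ^ 2 - (-Complex.I * κ) ^ 2) / 2 else 0) • LinearMap.id := by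
    funext n
    by_cases hn : n = 0
    · rw [hn, hLt0, if_pos rfl, hI]
      module
    · rw [hLtn n hn, if_neg hn]
      module
  have hz : ∀ f : Module.End ℂ V, ⁅f, LinearMap.id⁆ = 0 := fun f ↦
    (Commute.one_right f).lie_eq
  have hvirLt := IsVirasoro.add_smul_heisenberg hz hvir hheis hLa (-Complex.I * κ) η
  rw [← hLt, hI, show (1 : ℂ) - 12 * -κ ^ 2 = 1 + 12 * κ ^ 2 by ring] at hvirLt
  exact hvirLt
end

section
/- For any permutation σ of {1,…,r} and any modes K_{ν₁},…,K_{ν_r} from a lowest weight representation {Lₙ, Wₙ} of the W₃-algebra with lowest weight vector Ψ, the difference K_{ν₁}⋯K_{ν_r}Ψ - K_{ν_{σ(1)}}⋯K_{ν_{σ(r)}}Ψ is a linear combination of vectors K_{ν'₁}⋯K_{ν'_s}Ψ with strictly smaller total grade g, where g assigns weight 2 to each L mode and weight 3 to each W mode. -/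
/-!
Reordering a word of modes changes it only by commutators of adjacent modes. In the W₃-algebra
every commutator of two modes of grades `d₁, d₂` is a combination of the identity, one mode, or
`Λ`, a (truncated) sum of products of two `L`-modes; all of these have grade `< d₁ + d₂`. So each
adjacent transposition, hence every permutation, only adds vectors of strictly smaller grade.
-/

namespace ModeWord

variable {ι R V : Type*} [Ring R] [AddCommGroup V] [Module R V]
  (K : ι → V →ₗ[R] V) (d : ι → ℕ) (Ψ : V)

def vec (l : List ι) : V := l.foldr (fun a v => K a v) Ψ

def grade (l : List ι) : ℕ := (l.map d).sum

def spanBelow (g : ℕ) : Submodule R V :=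
  Submodule.span R {v | ∃ l, grade d l < g ∧ v = vec K Ψ l}

variable {K d Ψ}

@[simp] lemma vec_cons (a : ι) (l : List ι) : vec K Ψ (a :: l) = K a (vec K Ψ l) := rfl

@[simp] lemma grade_cons (a : ι) (l : List ι) : grade d (a :: l) = d a + grade d l := by
  simp [grade]

lemma grade_perm {l l' : List ι} (hp : l.Perm l') : grade d l = grade d l' :=
  (hp.map d).sum_eq

lemma vec_mem_spanBelow {l : List ι} {g : ℕ} (hl : grade d l < g) :
    vec K Ψ l ∈ spanBelow K d Ψ g :=
  Submodule.subset_span ⟨l, hl, rfl⟩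

lemma apply_mem_spanBelow (a : ι) {g : ℕ} {v : V} (hv : v ∈ spanBelow K d Ψ g) :
    K a v ∈ spanBelow K d Ψ (d a + g) := by
  have hle : spanBelow K d Ψ g ≤ (spanBelow K d Ψ (d a + g)).comap (K a) := by
    refine Submodule.span_le.mpr ?_
    rintro _ ⟨l, hl, rfl⟩
    exact vec_mem_spanBelow (l := a :: l) (by rw [grade_cons]; omega)
  exact hle hv

theorem vec_sub_vec_mem_spanBelow_of_perm
    (hswap : ∀ a b t, vec K Ψ (a :: b :: t) - vec K Ψ (b :: a :: t) ∈
      spanBelow K d Ψ (grade d (a :: b :: t)))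
    {l l' : List ι} (hp : l.Perm l') : vec K Ψ l - vec K Ψ l' ∈ spanBelow K d Ψ (grade d l) := by
  induction hp with
  | nil => simp
  | cons a _ ih =>
    rw [vec_cons, vec_cons, ← map_sub, grade_cons]
    exact apply_mem_spanBelow a ih
  | swap a b t => exact hswap b a t
  | trans h₁₂ _ ih₁₂ ih₂₃ =>
    rw [← sub_add_sub_cancel _ (vec K Ψ _)]
    exact add_mem ih₁₂ (grade_perm h₁₂ ▸ ih₂₃)

end ModeWord

namespace W3

open ModeWord

variable {V : Type*} [AddCommGroup V] [Module ℂ V] (L W : ℤ → V →ₗ[ℂ] V)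

def mode (p : Bool × ℤ) : V →ₗ[ℂ] V := if p.1 then L p.2 else W p.2

def modeGrade (p : Bool × ℤ) : ℕ := if p.1 then 2 else 3

@[simp] lemma modeGrade_L (n : ℤ) : modeGrade (true, n) = 2 := rfl

@[simp] lemma modeGrade_W (n : ℤ) : modeGrade (false, n) = 3 := rfl

variable {L W} {Ψ : V} {t : List (Bool × ℤ)} {g : ℕ}

lemma L_apply_mem_spanBelow (k : ℤ) (hg : grade modeGrade t + 2 < g) :
    L k (vec (mode L W) Ψ t) ∈ spanBelow (mode L W) modeGrade Ψ g :=
  vec_mem_spanBelow (l := (true, k) :: t) (by rw [grade_cons, modeGrade_L]; omega)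

lemma W_apply_mem_spanBelow (k : ℤ) (hg : grade modeGrade t + 3 < g) :
    W k (vec (mode L W) Ψ t) ∈ spanBelow (mode L W) modeGrade Ψ g :=
  vec_mem_spanBelow (l := (false, k) :: t) (by rw [grade_cons, modeGrade_W]; omega)

lemma Λ_apply_mem_spanBelow {Λ : ℤ → V →ₗ[ℂ] V}
    (hΛ : ∀ (n : ℤ) (v : V), ∃ N : ℕ, ∀ M : ℕ, N ≤ M →
      Λ n v = (∑ k ∈ Finset.Icc (-1 : ℤ) (M : ℤ), L (n - k) (L k v))
        + (∑ k ∈ Finset.Icc (-(M : ℤ)) (-2 : ℤ), L k (L (n - k) v))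
        - ((3 / 10 : ℂ) * ((n : ℂ) + 2) * ((n : ℂ) + 3)) • L n v)
    (n : ℤ) (hg : grade modeGrade t + 4 < g) :
    Λ n (vec (mode L W) Ψ t) ∈ spanBelow (mode L W) modeGrade Ψ g := by
  have hLL : ∀ j k, L j (L k (vec (mode L W) Ψ t)) ∈ spanBelow (mode L W) modeGrade Ψ g :=
    fun j k => vec_mem_spanBelow (l := (true, j) :: (true, k) :: t)
      (by simp only [grade_cons, modeGrade_L]; omega)
  obtain ⟨N, hN⟩ := hΛ n (vec (mode L W) Ψ t)
  rw [hN N le_rfl]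
  exact sub_mem (add_mem (sum_mem fun _ _ => hLL _ _) (sum_mem fun _ _ => hLL _ _))
    (Submodule.smul_mem _ _ (L_apply_mem_spanBelow n (by omega)))

theorem swap_mem_spanBelow (c b : ℂ) (Λ : ℤ → V →ₗ[ℂ] V)
    (hΛ : ∀ (n : ℤ) (v : V), ∃ N : ℕ, ∀ M : ℕ, N ≤ M →
      Λ n v = (∑ k ∈ Finset.Icc (-1 : ℤ) (M : ℤ), L (n - k) (L k v))
        + (∑ k ∈ Finset.Icc (-(M : ℤ)) (-2 : ℤ), L k (L (n - k) v))
        - ((3 / 10 : ℂ) * ((n : ℂ) + 2) * ((n : ℂ) + 3)) • L n v)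
    (hLL : ∀ m n : ℤ, L m ∘ₗ L n - L n ∘ₗ L m
      = ((m : ℂ) - (n : ℂ)) • L (m + n)
        + (if m + n = 0 then c / 12 * (m : ℂ) * ((m : ℂ) ^ 2 - 1) else 0) • LinearMap.id)
    (hLW : ∀ m n : ℤ, L m ∘ₗ W n - W n ∘ₗ L m = (2 * (m : ℂ) - (n : ℂ)) • W (m + n))
    (hWW : ∀ m n : ℤ, W m ∘ₗ W n - W n ∘ₗ W m
      = (if m + n = 0 then
          c / 360 * ((m : ℂ) ^ 2 - 4) * ((m : ℂ) ^ 2 - 1) * (m : ℂ) else 0) • LinearMap.id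
        + (b ^ 2 * ((m : ℂ) - (n : ℂ))) • Λ (m + n)
        + ((1 / 20 : ℂ) * ((m : ℂ) - (n : ℂ))
            * (2 * (m : ℂ) ^ 2 - (m : ℂ) * (n : ℂ) + 2 * (n : ℂ) ^ 2 - 8)) • L (m + n))
    (p q : Bool × ℤ) (t : List (Bool × ℤ)) :
    vec (mode L W) Ψ (p :: q :: t) - vec (mode L W) Ψ (q :: p :: t) ∈
      spanBelow (mode L W) modeGrade Ψ (grade modeGrade (p :: q :: t)) := by
  obtain ⟨_ | _, m⟩ := p <;> obtain ⟨_ | _, n⟩ := q <;>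
    simp only [vec_cons, grade_cons, modeGrade_L, modeGrade_W, mode, Bool.false_eq_true,
      if_true, if_false]
  · rw [← LinearMap.comp_apply, ← LinearMap.comp_apply, ← LinearMap.sub_apply, hWW]
    simp only [LinearMap.add_apply, LinearMap.smul_apply, LinearMap.id_apply]
    exact add_mem (add_mem (Submodule.smul_mem _ _ (vec_mem_spanBelow (by omega)))
      (Submodule.smul_mem _ _ (Λ_apply_mem_spanBelow hΛ _ (by omega))))
      (Submodule.smul_mem _ _ (L_apply_mem_spanBelow _ (by omega)))
  · rw [← neg_sub, ← LinearMap.comp_apply, ← LinearMap.comp_apply, ← LinearMap.sub_apply, hLW,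
      LinearMap.smul_apply]
    exact neg_mem (Submodule.smul_mem _ _ (W_apply_mem_spanBelow _ (by omega)))
  · rw [← LinearMap.comp_apply, ← LinearMap.comp_apply, ← LinearMap.sub_apply, hLW,
      LinearMap.smul_apply]
    exact Submodule.smul_mem _ _ (W_apply_mem_spanBelow _ (by omega))
  · rw [← LinearMap.comp_apply, ← LinearMap.comp_apply, ← LinearMap.sub_apply, hLL]
    simp only [LinearMap.add_apply, LinearMap.smul_apply, LinearMap.id_apply]
    exact add_mem (Submodule.smul_mem _ _ (L_apply_mem_spanBelow _ (by omega)))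
      (Submodule.smul_mem _ _ (vec_mem_spanBelow (by omega)))

end W3

open ModeWord W3 in
theorem stmt_16_general {V : Type*} [AddCommGroup V] [Module ℂ V]
    (c b : ℂ)
    (L W Λ : ℤ → V →ₗ[ℂ] V)
    (hΛ : ∀ (n : ℤ) (v : V), ∃ N : ℕ, ∀ M : ℕ, N ≤ M →
      Λ n v = (∑ k ∈ Finset.Icc (-1 : ℤ) (M : ℤ), L (n - k) (L k v))
        + (∑ k ∈ Finset.Icc (-(M : ℤ)) (-2 : ℤ), L k (L (n - k) v))
        - ((3 / 10 : ℂ) * ((n : ℂ) + 2) * ((n : ℂ) + 3)) • L n v)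
    (hLL : ∀ m n : ℤ, L m ∘ₗ L n - L n ∘ₗ L m
      = ((m : ℂ) - (n : ℂ)) • L (m + n)
        + (if m + n = 0 then c / 12 * (m : ℂ) * ((m : ℂ) ^ 2 - 1) else 0) • LinearMap.id)
    (hLW : ∀ m n : ℤ, L m ∘ₗ W n - W n ∘ₗ L m = (2 * (m : ℂ) - (n : ℂ)) • W (m + n))
    (hWW : ∀ m n : ℤ, W m ∘ₗ W n - W n ∘ₗ W m
      = (if m + n = 0 then
          c / 360 * ((m : ℂ) ^ 2 - 4) * ((m : ℂ) ^ 2 - 1) * (m : ℂ) else 0) • LinearMap.id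
        + (b ^ 2 * ((m : ℂ) - (n : ℂ))) • Λ (m + n)
        + ((1 / 20 : ℂ) * ((m : ℂ) - (n : ℂ))
            * (2 * (m : ℂ) ^ 2 - (m : ℂ) * (n : ℂ) + 2 * (n : ℂ) ^ 2 - 8)) • L (m + n))
    (Ψ : V)
    (f : Bool × ℤ → V → V) (hf : ∀ p x, f p x = (if p.1 then L p.2 else W p.2) x)
    (gdeg : List (Bool × ℤ) → ℕ)
    (hg : ∀ l : List (Bool × ℤ), gdeg l = (l.map (fun p => if p.1 then 2 else 3)).sum) :
    ∀ l l' : List (Bool × ℤ), l.Perm l' →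
      (l.foldr f Ψ) - (l'.foldr f Ψ) ∈ Submodule.span ℂ
        {v : V | ∃ l'' : List (Bool × ℤ), gdeg l'' < gdeg l ∧ v = l''.foldr f Ψ} := by
  obtain rfl : f = fun p v => mode L W p v := funext₂ hf
  obtain rfl : gdeg = grade modeGrade := funext hg
  intro l l' hp
  exact vec_sub_vec_mem_spanBelow_of_perm (swap_mem_spanBelow c b Λ hΛ hLL hLW hWW) hp

/-- In a lowest weight representation {Lₙ, Wₙ} of the W₃-algebra with lowest weight
vector Ψ, for any permutation of a product of modes applied to Ψ, the difference
K_{ν₁}⋯K_{ν_r}Ψ - K_{ν_{σ(1)}}⋯K_{ν_{σ(r)}}Ψ lies in the span of vectors K_{ν'₁}⋯K_{ν'_s}Ψ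
of strictly smaller total grade g (with g(L) = 2, g(W) = 3).  A pair (true, n) encodes Lₙ
and (false, n) encodes Wₙ. -/
theorem stmt_16 {V : Type*} [AddCommGroup V] [Module ℂ V]
    (c h w b : ℂ) (hc : c ≠ -22 / 5) (hb : b ^ 2 = 16 / (22 + 5 * c))
    (L W Λ : ℤ → V →ₗ[ℂ] V)
    (hfield : ∀ v : V, ∃ N : ℤ, ∀ n : ℤ, N ≤ n → L n v = 0 ∧ W n v = 0)
    (hΛ : ∀ (n : ℤ) (v : V), ∃ N : ℕ, ∀ M : ℕ, N ≤ M →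
      Λ n v = (∑ k ∈ Finset.Icc (-1 : ℤ) (M : ℤ), L (n - k) (L k v))
        + (∑ k ∈ Finset.Icc (-(M : ℤ)) (-2 : ℤ), L k (L (n - k) v))
        - ((3 / 10 : ℂ) * ((n : ℂ) + 2) * ((n : ℂ) + 3)) • L n v)
    (hLL : ∀ m n : ℤ, L m ∘ₗ L n - L n ∘ₗ L m
      = ((m : ℂ) - (n : ℂ)) • L (m + n)
        + (if m + n = 0 then c / 12 * (m : ℂ) * ((m : ℂ) ^ 2 - 1) else 0) • LinearMap.id)
    (hLW : ∀ m n : ℤ, L m ∘ₗ W n - W n ∘ₗ L m = (2 * (m : ℂ) - (n : ℂ)) • W (m + n))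
    (hWW : ∀ m n : ℤ, W m ∘ₗ W n - W n ∘ₗ W m
      = (if m + n = 0 then
          c / 360 * ((m : ℂ) ^ 2 - 4) * ((m : ℂ) ^ 2 - 1) * (m : ℂ) else 0) • LinearMap.id
        + (b ^ 2 * ((m : ℂ) - (n : ℂ))) • Λ (m + n)
        + ((1 / 20 : ℂ) * ((m : ℂ) - (n : ℂ))
            * (2 * (m : ℂ) ^ 2 - (m : ℂ) * (n : ℂ) + 2 * (n : ℂ) ^ 2 - 8)) • L (m + n))
    (Ψ : V)
    (hpos : ∀ n : ℤ, 0 < n → L n Ψ = 0 ∧ W n Ψ = 0)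
    (hL0 : L 0 Ψ = h • Ψ) (hW0 : W 0 Ψ = w • Ψ)
    (f : Bool × ℤ → V → V) (hf : ∀ p x, f p x = (if p.1 then L p.2 else W p.2) x)
    (gdeg : List (Bool × ℤ) → ℕ)
    (hg : ∀ l : List (Bool × ℤ), gdeg l = (l.map (fun p => if p.1 then 2 else 3)).sum) :
    ∀ l l' : List (Bool × ℤ), l.Perm l' →
      (l.foldr f Ψ) - (l'.foldr f Ψ) ∈ Submodule.span ℂ
        {v : V | ∃ l'' : List (Bool × ℤ), gdeg l'' < gdeg l ∧ v = l''.foldr f Ψ} :=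
  stmt_16_general c b L W Λ hΛ hLL hLW hWW Ψ f hf gdeg hg
end
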